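/- arXiv:math/9901019 — 4 statements merged into one kernel-verified Lean document; each statement's English description precedes it below -/
import Mathlib

section
/- Let A be an associative algebra over a commutative ring containing an invertible scalar r, with elements z¹, z², z³, z⁴ satisfying z¹z² = r²z²z¹, z¹z³ = z³z¹, z⁴z¹ = r²z¹z⁴, z²z³ = r²z³z², z²z⁴ = z⁴z², z³z⁴ = r²z⁴z³. Then the element z²z⁴ commutes with each of z¹, z², z³, z⁴, and consequently the deformed invariant length r⁻¹z¹z³ − r z²z⁴ is central in the subalgebra generated by z¹, z², z³, z⁴. -/
lemma unit_smul_cancel {k A : Type*} [CommRing k] [Ring A] [Algebra k A]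
    (r : kˣ) {x y : A} (h : ((r : k) ^ 2) • x = ((r : k) ^ 2) • y) : x = y := by
  have := congrArg (fun t => ((↑r⁻¹ : k) ^ 2) • t) h
  simpa [smul_smul, ← mul_pow] using this

/-- in the q-Minkowski algebra, `z²z⁴` commutes with each
generator, and the deformed invariant length `r⁻¹z¹z³ − r z²z⁴` is central in
the subalgebra generated by `z¹, z², z³, z⁴`. -/
theorem z2z4_commutes_and_invariant_central {k A : Type*} [CommRing k] [Ring A] [Algebra k A]
    (r : kˣ) (z1 z2 z3 z4 : A)
    (h12 : z1 * z2 = ((r : k) ^ 2) • (z2 * z1))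
    (h13 : z1 * z3 = z3 * z1)
    (h41 : z4 * z1 = ((r : k) ^ 2) • (z1 * z4))
    (h23 : z2 * z3 = ((r : k) ^ 2) • (z3 * z2))
    (h24 : z2 * z4 = z4 * z2)
    (h34 : z3 * z4 = ((r : k) ^ 2) • (z4 * z3)) :
    (Commute (z2 * z4) z1 ∧ Commute (z2 * z4) z2 ∧
     Commute (z2 * z4) z3 ∧ Commute (z2 * z4) z4) ∧
    ∀ w ∈ Algebra.adjoin k ({z1, z2, z3, z4} : Set A),
      Commute ((↑r⁻¹ : k) • (z1 * z3) - (r : k) • (z2 * z4)) w := by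
  have c241 : Commute (z2 * z4) z1 := by
    show z2 * z4 * z1 = z1 * (z2 * z4)
    calc z2 * z4 * z1 = z2 * (z4 * z1) := by rw [mul_assoc]
      _ = ((r : k) ^ 2) • (z2 * z1 * z4) := by rw [h41, mul_smul_comm, mul_assoc]
      _ = z1 * z2 * z4 := by rw [h12, smul_mul_assoc]
      _ = z1 * (z2 * z4) := by rw [mul_assoc]
  have c242 : Commute (z2 * z4) z2 := by
    show z2 * z4 * z2 = z2 * (z2 * z4)
    rw [mul_assoc, ← h24]
  have c243 : Commute (z2 * z4) z3 := by
    show z2 * z4 * z3 = z3 * (z2 * z4)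
    apply unit_smul_cancel r
    calc ((r : k) ^ 2) • (z2 * z4 * z3) = z2 * (z3 * z4) := by
          rw [h34, mul_smul_comm, mul_assoc]
      _ = ((r : k) ^ 2) • (z3 * (z2 * z4)) := by
          rw [← mul_assoc, h23, smul_mul_assoc, mul_assoc]
  have c244 : Commute (z2 * z4) z4 := by
    show z2 * z4 * z4 = z4 * (z2 * z4)
    nth_rewrite 1 [h24]
    rw [mul_assoc]
  have c131 : Commute (z1 * z3) z1 := by
    show z1 * z3 * z1 = z1 * (z1 * z3)
    rw [mul_assoc, ← h13, ← mul_assoc, mul_assoc]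
  have c132 : Commute (z1 * z3) z2 := by
    show z1 * z3 * z2 = z2 * (z1 * z3)
    apply unit_smul_cancel r
    calc ((r : k) ^ 2) • (z1 * z3 * z2) = z1 * (z2 * z3) := by
          rw [h23, mul_smul_comm, mul_assoc]
      _ = ((r : k) ^ 2) • (z2 * (z1 * z3)) := by
          rw [← mul_assoc, h12, smul_mul_assoc, mul_assoc]
  have c133 : Commute (z1 * z3) z3 := by
    show z1 * z3 * z3 = z3 * (z1 * z3)
    conv_lhs => rw [h13]
    rw [mul_assoc]
  have c134 : Commute (z1 * z3) z4 := by
    show z1 * z3 * z4 = z4 * (z1 * z3)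
    calc z1 * z3 * z4 = ((r : k) ^ 2) • (z1 * z4 * z3) := by
          rw [mul_assoc, h34, mul_smul_comm, mul_assoc]
      _ = z4 * z1 * z3 := by rw [← smul_mul_assoc, ← h41]
      _ = z4 * (z1 * z3) := by rw [mul_assoc]
  refine ⟨⟨c241, c242, c243, c244⟩, ?_⟩
  set L : A := (↑r⁻¹ : k) • (z1 * z3) - (r : k) • (z2 * z4) with hL
  have key : ∀ i ∈ ({z1, z2, z3, z4} : Set A), Commute L i := by
    rintro i (rfl | rfl | rfl | rfl) <;>
      exact Commute.sub_left (Commute.smul_left (by assumption) _)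
        (Commute.smul_left (by assumption) _)
  intro w hw
  induction hw using Algebra.adjoin_induction with
  | mem x hx => exact key x hx
  | algebraMap c => exact (Algebra.commutes c L).symm
  | add x y _ _ hx hy => exact hx.add_right hy
  | mul x y _ _ hx hy => exact hx.mul_right hy
end

section
/- Let R = ℚ[[ξ]] (or any commutative ring with a topologically nilpotent element ξ) and let A be an associative R-algebra containing elements H and X with [H, X] = −2X, completed so that power series in ξX converge. Define σ = −(1/2)·log(1 − 2ξX) = Σ_{n≥1} (2ξX)ⁿ/(2n) as a formal power series. Then [H, σ] = 1 − exp(2σ) = 1 − (1 − 2ξX)⁻¹, i.e. H σ − σ H = −2ξX·(1−2ξX)⁻¹. -/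
theorem mul_pow_sub_pow_mul_of_mul_sub_mul_eq_smul {R A : Type*} [CommSemiring R] [Ring A]
    [Algebra R A] {H X : A} {c : R} (h : H * X - X * H = c • X) (n : ℕ) :
    H * X ^ n - X ^ n * H = (n * c) • X ^ n := by
  induction n with
  | zero => simp
  | succ n ih =>
    calc H * X ^ (n + 1) - X ^ (n + 1) * H
        = (H * X - X * H) * X ^ n + X * (H * X ^ n - X ^ n * H) := by
          rw [pow_succ']; noncomm_ring
      _ = ((n + 1 : ℕ) * c) • X ^ (n + 1) := by
          rw [h, ih, smul_mul_assoc, mul_smul_comm, ← pow_succ', ← add_smul]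
          push_cast; ring_nf

/-- Series in `ξX` are modelled in `A[[ξ]]`, the coefficient of `ξⁿ` being a multiple of `Xⁿ`;
the right-hand side is `−2ξX(1 − 2ξX)⁻¹ = −Σ_{n≥1} (2ξX)ⁿ`. Since `[H, Xⁿ] = −2n Xⁿ`, the
factor `1/(2n)` in the coefficients of `σ` cancels. -/
theorem commutator_with_sigma {A : Type*} [Ring A] [Algebra ℚ A]
    (H X : A) (hHX : H * X - X * H = -(2 * X)) :
    let σ : PowerSeries A :=
      PowerSeries.mk fun n => if n = 0 then 0 else (((2 : ℚ) ^ n / (2 * n)) • X ^ n)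
    PowerSeries.C H * σ - σ * PowerSeries.C H =
      PowerSeries.mk fun n => if n = 0 then 0 else ((-(2 : ℚ) ^ n) • X ^ n) := by
  intro σ
  have hHX' : H * X - X * H = (-2 : ℚ) • X := by
    rw [hHX, neg_smul, ofNat_smul_eq_nsmul, nsmul_eq_mul, Nat.cast_ofNat]
  ext n
  simp only [map_sub, PowerSeries.coeff_C_mul, PowerSeries.coeff_mul_C, PowerSeries.coeff_mk, σ]
  rcases eq_or_ne n 0 with rfl | hn
  · simp
  · rw [if_neg hn, if_neg hn, mul_smul_comm, smul_mul_assoc, ← smul_sub,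
      mul_pow_sub_pow_mul_of_mul_sub_mul_eq_smul hHX' n, smul_smul]
    congr 1
    field_simp
end

section
/- Let H be a Hopf algebra with bijective antipode S, equipped with an antilinear map * that is an algebra anti-automorphism, a coalgebra automorphism, and an involution, and define θ = S ∘ *. Let Φ = Σ Φ₁ ⊗ Φ₂ be a normalized twist for H satisfying Φ* = Φ⁻¹ (where * acts entrywise on the tensor factors). Define u = Σ (Φ⁻¹)₁ · S((Φ⁻¹)₂). Then θ(u) = u⁻¹, where u⁻¹ = Σ S(Φ₁)Φ₂. -/
open TensorProduct

variable (k H : Type*) [Field k] [Ring H] [HopfAlgebra k H]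

/-- `ε ⊗ id : H ⊗ H → H`. -/
noncomputable def epsId : H ⊗[k] H →ₗ[k] H :=
  (TensorProduct.lid k H).toLinearMap ∘ₗ
    TensorProduct.map (Coalgebra.counit : H →ₗ[k] k) LinearMap.id

/-- `id ⊗ ε : H ⊗ H → H`. -/
noncomputable def idEps : H ⊗[k] H →ₗ[k] H :=
  (TensorProduct.rid k H).toLinearMap ∘ₗ
    TensorProduct.map LinearMap.id (Coalgebra.counit : H →ₗ[k] k)

/-- The twist (2-cocycle) equation `(Δ ⊗ id)(Φ)·Φ₁₂ = (id ⊗ Δ)(Φ)·Φ₂₃`. -/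
noncomputable def IsTwist (Φ : H ⊗[k] H) : Prop :=
  (Algebra.TensorProduct.assoc k k k H H H)
      ((Algebra.TensorProduct.map (Bialgebra.comulAlgHom k H) (AlgHom.id k H)) Φ *
        (Φ ⊗ₜ[k] (1 : H)))
    = (Algebra.TensorProduct.map (AlgHom.id k H) (Bialgebra.comulAlgHom k H)) Φ *
        ((1 : H) ⊗ₜ[k] Φ)

section StarAntipode

open HopfAlgebra

variable {R A : Type*} [CommSemiring R] [Semiring A] [HopfAlgebra R A] {s : A →+ A}

theorem antipode_star_mul_antipode_star (hs_anti : ∀ x y : A, s (x * y) = s y * s x)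
    (hs_invol : ∀ x : A, s (s x) = x) (hSs : ∀ x : A, antipode R (s (antipode R x)) = s x)
    (x y : A) : antipode R (s (s x * antipode R (s y))) = antipode R x * y := by
  rw [hs_anti, hs_invol, antipode_mul_antidistrib, hSs, hs_invol]

/-- Applied to `t = Φ` with `(* ⊗ *) Φ = Φ⁻¹`, the left side is `θ(u)` and the right side `u⁻¹`. -/
theorem antipode_star_mul'_map_antipode {S₂ : A ⊗[R] A →+ A ⊗[R] A}
    (hS₂ : ∀ x y : A, S₂ (x ⊗ₜ[R] y) = s x ⊗ₜ[R] s y)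
    (hs_anti : ∀ x y : A, s (x * y) = s y * s x) (hs_invol : ∀ x : A, s (s x) = x)
    (hSs : ∀ x : A, antipode R (s (antipode R x)) = s x) (t : A ⊗[R] A) :
    antipode R (s (LinearMap.mul' R A (TensorProduct.map LinearMap.id (antipode R) (S₂ t)))) =
      LinearMap.mul' R A (TensorProduct.map (antipode R) LinearMap.id t) := by
  induction t using TensorProduct.induction_on with
  | zero => simp
  | tmul x y =>
    simpa [hS₂] using antipode_star_mul_antipode_star hs_anti hs_invol hSs x y
  | add t t' ht ht' => simp only [map_add, ht, ht']

end StarAntipode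

theorem theta_of_u_general {H : Type*} [Ring H] [HopfAlgebra ℂ H]
    (s : H →+ H)
    (hs_anti : ∀ x y : H, s (x * y) = s y * s x)
    (hs_invol : ∀ x : H, s (s x) = x)
    -- `* ⊗ *` on `H ⊗ H`:
    (S₂ : H ⊗[ℂ] H →+ H ⊗[ℂ] H)
    (hS₂ : ∀ x y : H, S₂ (x ⊗ₜ[ℂ] y) = s x ⊗ₜ[ℂ] s y)
    -- `S` is bijective and `S∘* = *∘S⁻¹` (equivalently `S(*(S x)) = *(x)`):
    (hSs : ∀ x : H,
      HopfAlgebra.antipode (R := ℂ) (s (HopfAlgebra.antipode (R := ℂ) x)) = s x)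
    -- the twist, normalized, with `Φ* = Φ⁻¹`:
    (Φ : (H ⊗[ℂ] H)ˣ)
    (hreal : S₂ (Φ : H ⊗[ℂ] H) = (↑Φ⁻¹ : H ⊗[ℂ] H)) :
    HopfAlgebra.antipode (R := ℂ)
        (s (LinearMap.mul' ℂ H
          ((TensorProduct.map LinearMap.id (HopfAlgebra.antipode (R := ℂ)))
            (↑Φ⁻¹ : H ⊗[ℂ] H)))) =
      LinearMap.mul' ℂ H
        ((TensorProduct.map (HopfAlgebra.antipode (R := ℂ)) LinearMap.id)
          (Φ : H ⊗[ℂ] H)) := by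
  rw [← hreal]
  exact antipode_star_mul'_map_antipode hS₂ hs_anti hs_invol hSs _

/-- Lemma 1 of the paper: if `*` is an antilinear involutive
algebra anti-automorphism and coalgebra automorphism of a Hopf algebra `H`
over `ℂ` with bijective antipode `S` satisfying `S∘* = *∘S⁻¹`, and `Φ` is a
normalized twist with `Φ* = Φ⁻¹`, then for `u = Σ (Φ⁻¹)₁ S((Φ⁻¹)₂)` and
`θ = S∘*` one has `θ(u) = u⁻¹ = Σ S(Φ₁)Φ₂`. -/
theorem theta_of_u {H : Type*} [Ring H] [HopfAlgebra ℂ H]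
    (s : H →+ H)
    (hs_anti : ∀ x y : H, s (x * y) = s y * s x)
    (hs_invol : ∀ x : H, s (s x) = x)
    (hs_smul : ∀ (c : ℂ) (x : H), s (c • x) = (starRingEnd ℂ c) • s x)
    (hs_counit : ∀ x : H,
      Coalgebra.counit (R := ℂ) (s x) = starRingEnd ℂ (Coalgebra.counit (R := ℂ) x))
    -- `* ⊗ *` on `H ⊗ H`:
    (S₂ : H ⊗[ℂ] H →+ H ⊗[ℂ] H)
    (hS₂ : ∀ x y : H, S₂ (x ⊗ₜ[ℂ] y) = s x ⊗ₜ[ℂ] s y)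
    -- `*` is a coalgebra automorphism: `Δ(x*) = (*⊗*)(Δ x)`:
    (hs_comul : ∀ x : H, Coalgebra.comul (R := ℂ) (s x) = S₂ (Coalgebra.comul x))
    -- `S` is bijective and `S∘* = *∘S⁻¹` (equivalently `S(*(S x)) = *(x)`):
    (hS_bij : Function.Bijective (HopfAlgebra.antipode (R := ℂ) (A := H)))
    (hSs : ∀ x : H,
      HopfAlgebra.antipode (R := ℂ) (s (HopfAlgebra.antipode (R := ℂ) x)) = s x)
    -- the twist, normalized, with `Φ* = Φ⁻¹`:
    (Φ : (H ⊗[ℂ] H)ˣ)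
    (htwist : IsTwist ℂ H (Φ : H ⊗[ℂ] H))
    (hnorm₁ : epsId ℂ H (Φ : H ⊗[ℂ] H) = 1)
    (hnorm₂ : idEps ℂ H (Φ : H ⊗[ℂ] H) = 1)
    (hreal : S₂ (Φ : H ⊗[ℂ] H) = (↑Φ⁻¹ : H ⊗[ℂ] H)) :
    HopfAlgebra.antipode (R := ℂ)
        (s (LinearMap.mul' ℂ H
          ((TensorProduct.map LinearMap.id (HopfAlgebra.antipode (R := ℂ)))
            (↑Φ⁻¹ : H ⊗[ℂ] H)))) =
      LinearMap.mul' ℂ H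
        ((TensorProduct.map (HopfAlgebra.antipode (R := ℂ)) LinearMap.id)
          (Φ : H ⊗[ℂ] H)) :=
  theta_of_u_general s hs_anti hs_invol S₂ hS₂ hSs Φ hreal
end

section
/- Let A and B be Hopf algebras, H = A ⊗ B their tensor product Hopf algebra, and Φ ∈ A ⊗ B, regarded as an element of H ⊗ H via the embedding a⊗b ↦ (a⊗1)⊗(1⊗b). Suppose Φ is invertible and satisfies the factorization conditions (Δ_A ⊗ id_B)(Φ) = Φ₁₃Φ₂₃ in A⊗A⊗B and (id_A ⊗ Δ_B)(Φ) = Φ₁₃Φ₁₂ in A⊗B⊗B, together with (ε_A⊗id)(Φ) = 1 and (id⊗ε_B)(Φ) = 1. Then Φ satisfies the twist equation (Δ_H ⊗ id)(Φ)·(Φ ⊗ 1) = (id ⊗ Δ_H)(Φ)·(1 ⊗ Φ) in H⊗H⊗H, and the normalization (ε_H ⊗ id)(Φ) = 1 = (id ⊗ ε_H)(Φ). -/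
/-!
Let `ι : A ⊗ B → H ⊗ H` be `a ⊗ b ↦ (a ⊗ 1) ⊗ (1 ⊗ b)`, so that `Φ = ι φ`. The inclusions
`a ↦ a ⊗ 1` and `b ↦ 1 ⊗ b` are bialgebra maps, so the factorization hypotheses on `φ` are carried
by `ι` to `(Δ_H ⊗ id) Φ = Φ₁₃ Φ₂₃` and `(id ⊗ Δ_H) Φ = Φ₁₃ Φ₁₂`; also `Φ ⊗ 1 = Φ₁₂` and
`1 ⊗ Φ = Φ₂₃`. The twist equation thus reads `Φ₁₃ Φ₂₃ Φ₁₂ = Φ₁₃ Φ₁₂ Φ₂₃`, and `Φ₁₂` commutes with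
`Φ₂₃`: in the outer factors one of them is `1`, and in the middle factor `H = A ⊗ B` the first only
involves `B` and the second only `A`.
The normalization follows from `ε_H (a ⊗ 1) = ε_A a` and `ε_H (1 ⊗ b) = ε_B b`.
-/

open TensorProduct

universe u

namespace Bialgebra.TensorProduct

variable (R A B : Type*) [CommSemiring R] [Semiring A] [Semiring B] [Bialgebra R A] [Bialgebra R B]

noncomputable def includeLeftBialgHom : A →ₐc[R] A ⊗[R] B :=
  (Bialgebra.TensorProduct.map (BialgHom.id R A) (unitBialgHom R B)).comp
    ((Bialgebra.TensorProduct.rid R R A).symm : A →ₐc[R] A ⊗[R] R)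

noncomputable def includeRightBialgHom : B →ₐc[R] A ⊗[R] B :=
  (Bialgebra.TensorProduct.map (unitBialgHom R A) (BialgHom.id R B)).comp
    ((Bialgebra.TensorProduct.lid R B).symm : B →ₐc[R] R ⊗[R] B)

lemma toLinearMap_includeLeftBialgHom :
    (includeLeftBialgHom R A B : A →ₗ[R] A ⊗[R] B) =
      (Algebra.TensorProduct.includeLeft (S := R)).toLinearMap :=
  LinearMap.ext fun _ => by simp [includeLeftBialgHom]

lemma toLinearMap_includeRightBialgHom :
    (includeRightBialgHom R A B : B →ₗ[R] A ⊗[R] B) =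
      Algebra.TensorProduct.includeRight.toLinearMap :=
  LinearMap.ext fun _ => by simp [includeRightBialgHom]

variable {R A B}

lemma comul_comp_includeLeft :
    Coalgebra.comul ∘ₗ
        (Algebra.TensorProduct.includeLeft (S := R) : A →ₐ[R] A ⊗[R] B).toLinearMap =
      _root_.TensorProduct.map (Algebra.TensorProduct.includeLeft (S := R)).toLinearMap
        (Algebra.TensorProduct.includeLeft (S := R)).toLinearMap ∘ₗ Coalgebra.comul := by
  rw [← toLinearMap_includeLeftBialgHom]
  exact (CoalgHomClass.map_comp_comul _).symm

lemma comul_comp_includeRight :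
    Coalgebra.comul ∘ₗ (Algebra.TensorProduct.includeRight : B →ₐ[R] A ⊗[R] B).toLinearMap =
      _root_.TensorProduct.map Algebra.TensorProduct.includeRight.toLinearMap
        Algebra.TensorProduct.includeRight.toLinearMap ∘ₗ Coalgebra.comul := by
  rw [← toLinearMap_includeRightBialgHom]
  exact (CoalgHomClass.map_comp_comul _).symm

end Bialgebra.TensorProduct

lemma TensorProduct.commute_of_commute_tmul {R M N P Q C : Type*} [CommSemiring R]
    [AddCommMonoid M] [AddCommMonoid N] [AddCommMonoid P] [AddCommMonoid Q] [Semiring C]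
    [Module R M] [Module R N] [Module R P] [Module R Q] [Module R C]
    (f : M ⊗[R] N →ₗ[R] C) (g : P ⊗[R] Q →ₗ[R] C)
    (h : ∀ m n p q, Commute (f (m ⊗ₜ n)) (g (p ⊗ₜ q))) (x : M ⊗[R] N) (y : P ⊗[R] Q) :
    Commute (f x) (g y) := by
  induction x using TensorProduct.induction_on with
  | zero => simp
  | add x x' hx hx' => simpa only [map_add] using hx.add_left hx'
  | tmul m n =>
    induction y using TensorProduct.induction_on with
    | zero => simp
    | add y y' hy hy' => simpa only [map_add] using hy.add_right hy'
    | tmul p q => exact h m n p q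

namespace TwistedTensor

open Algebra.TensorProduct (includeLeft includeRight)

section Legs

variable {R A B : Type*} [CommSemiring R] [Semiring A] [Semiring B] [Algebra R A] [Algebra R B]

local notation "H" => A ⊗[R] B

noncomputable def embed : A ⊗[R] B →ₐ[R] H ⊗[R] H :=
  Algebra.TensorProduct.map includeLeft includeRight

-- `leg₁₂ φ`, `leg₁₃ φ`, `leg₂₃ φ` are the legs `Φ₁₂`, `Φ₁₃`, `Φ₂₃` of `Φ = embed φ`.
noncomputable def leg₁₂ : A ⊗[R] B →ₐ[R] H ⊗[R] (H ⊗[R] H) :=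
  Algebra.TensorProduct.map includeLeft (includeLeft.comp includeRight)

noncomputable def leg₁₃ : A ⊗[R] B →ₐ[R] H ⊗[R] (H ⊗[R] H) :=
  Algebra.TensorProduct.map includeLeft (includeRight.comp includeRight)

noncomputable def leg₂₃ : A ⊗[R] B →ₐ[R] H ⊗[R] (H ⊗[R] H) :=
  includeRight.comp embed

lemma assoc_embed_tmul_one (x : A ⊗[R] B) :
    Algebra.TensorProduct.assoc R R R H H H (embed x ⊗ₜ 1) = leg₁₂ x := by
  induction x using TensorProduct.induction_on with
  | zero => simp
  | tmul a b => simp [embed, leg₁₂]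
  | add x y hx hy => simp only [map_add, add_tmul, hx, hy]

lemma one_tmul_embed (x : A ⊗[R] B) : (1 : H) ⊗ₜ embed x = leg₂₃ x := rfl

lemma commute_leg₁₂_leg₂₃ (x y : A ⊗[R] B) : Commute (leg₁₂ x) (leg₂₃ y) := by
  refine TensorProduct.commute_of_commute_tmul (leg₁₂ (R := R) (A := A) (B := B)).toLinearMap
    (leg₂₃ (R := R) (A := A) (B := B)).toLinearMap (fun a b a' b' => ?_) x y
  simp only [leg₁₂, leg₂₃, embed, AlgHom.toLinearMap_apply, AlgHom.comp_apply,
    Algebra.TensorProduct.map_tmul, Algebra.TensorProduct.includeLeft_apply,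
    Algebra.TensorProduct.includeRight_apply]
  simp only [Commute, SemiconjBy, Algebra.TensorProduct.tmul_mul_tmul, one_mul, mul_one]

noncomputable def embedAAB : A ⊗[R] (A ⊗[R] B) →ₐ[R] H ⊗[R] (H ⊗[R] H) :=
  Algebra.TensorProduct.map includeLeft embed

noncomputable def embedABB : (A ⊗[R] B) ⊗[R] B →ₐ[R] H ⊗[R] (H ⊗[R] H) :=
  (Algebra.TensorProduct.assoc R R R H H H).toAlgHom.comp
    (Algebra.TensorProduct.map embed includeRight)

lemma embedAAB_map_includeRight (x : A ⊗[R] B) :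
    embedAAB (TensorProduct.map LinearMap.id includeRight.toLinearMap x) = leg₁₃ x := by
  induction x using TensorProduct.induction_on with
  | zero => simp
  | tmul a b => simp [embedAAB, embed, leg₁₃, Algebra.TensorProduct.one_def]
  | add x y hx hy => simp only [map_add, hx, hy]

lemma embedAAB_one_tmul (x : A ⊗[R] B) : embedAAB ((1 : A) ⊗ₜ x) = leg₂₃ x := by
  simp [embedAAB, leg₂₃, Algebra.TensorProduct.one_def]

lemma embedABB_map_includeLeft (x : A ⊗[R] B) :
    embedABB (TensorProduct.map includeLeft.toLinearMap LinearMap.id x) = leg₁₃ x := by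
  induction x using TensorProduct.induction_on with
  | zero => simp
  | tmul a b => simp [embedABB, embed, leg₁₃, Algebra.TensorProduct.one_def]
  | add x y hx hy => simp only [map_add, hx, hy]

lemma embedABB_tmul_one (x : A ⊗[R] B) : embedABB (x ⊗ₜ (1 : B)) = leg₁₂ x := by
  rw [← assoc_embed_tmul_one]
  simp [embedABB, Algebra.TensorProduct.one_def]

end Legs

section Bialgebra

variable {R A B : Type*} [CommSemiring R] [Semiring A] [Semiring B] [Bialgebra R A] [Bialgebra R B]

local notation "H" => A ⊗[R] B

lemma assoc_comul_rTensor_embed (x : A ⊗[R] B) :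
    Algebra.TensorProduct.assoc R R R H H H
        (Algebra.TensorProduct.map (Bialgebra.comulAlgHom R H) (AlgHom.id R H) (embed x)) =
      embedAAB
        (TensorProduct.assoc R A A B (TensorProduct.map Coalgebra.comul LinearMap.id x)) := by
  change TensorProduct.assoc R H H H (TensorProduct.map Coalgebra.comul LinearMap.id
      (TensorProduct.map includeLeft.toLinearMap includeRight.toLinearMap x)) =
    TensorProduct.map includeLeft.toLinearMap
      (TensorProduct.map includeLeft.toLinearMap includeRight.toLinearMap)
      (TensorProduct.assoc R A A B (TensorProduct.map Coalgebra.comul LinearMap.id x))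
  rw [TensorProduct.map_map_assoc, TensorProduct.map_map, TensorProduct.map_map,
    Bialgebra.TensorProduct.comul_comp_includeLeft, LinearMap.id_comp, LinearMap.comp_id]

lemma comul_lTensor_embed (x : A ⊗[R] B) :
    Algebra.TensorProduct.map (AlgHom.id R H) (Bialgebra.comulAlgHom R H) (embed x) =
      embedABB ((TensorProduct.assoc R A B B).symm
        (TensorProduct.map LinearMap.id Coalgebra.comul x)) := by
  change TensorProduct.map LinearMap.id Coalgebra.comul
      (TensorProduct.map includeLeft.toLinearMap includeRight.toLinearMap x) =
    TensorProduct.assoc R H H H (TensorProduct.map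
      (TensorProduct.map includeLeft.toLinearMap includeRight.toLinearMap) includeRight.toLinearMap
      ((TensorProduct.assoc R A B B).symm (TensorProduct.map LinearMap.id Coalgebra.comul x)))
  rw [TensorProduct.map_map_assoc_symm, LinearEquiv.apply_symm_apply, TensorProduct.map_map,
    TensorProduct.map_map, Bialgebra.TensorProduct.comul_comp_includeRight, LinearMap.id_comp,
    LinearMap.comp_id]

lemma lid_counit_rTensor_embed (x : A ⊗[R] B) :
    TensorProduct.lid R H (TensorProduct.map Coalgebra.counit LinearMap.id (embed x)) =
      includeRight (TensorProduct.lid R B (TensorProduct.map Coalgebra.counit LinearMap.id x)) := by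
  induction x using TensorProduct.induction_on with
  | zero => simp
  | tmul a b => simp [embed, TensorProduct.counit_tmul]
  | add x y hx hy => simp only [map_add, hx, hy]

lemma rid_counit_lTensor_embed (x : A ⊗[R] B) :
    TensorProduct.rid R H (TensorProduct.map LinearMap.id Coalgebra.counit (embed x)) =
      includeLeft (S := R)
        (TensorProduct.rid R A (TensorProduct.map LinearMap.id Coalgebra.counit x)) := by
  induction x using TensorProduct.induction_on with
  | zero => simp
  | tmul a b => simp [embed, TensorProduct.counit_tmul, smul_tmul']
  | add x y hx hy => simp only [map_add, hx, hy]

lemma assoc_comul_rTensor_embed_of_factor {x : A ⊗[R] B}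
    (h : TensorProduct.assoc R A A B (TensorProduct.map Coalgebra.comul LinearMap.id x) =
      TensorProduct.map LinearMap.id includeRight.toLinearMap x * ((1 : A) ⊗ₜ x)) :
    Algebra.TensorProduct.assoc R R R H H H
        (Algebra.TensorProduct.map (Bialgebra.comulAlgHom R H) (AlgHom.id R H) (embed x)) =
      leg₁₃ x * leg₂₃ x := by
  rw [assoc_comul_rTensor_embed, h, map_mul, embedAAB_map_includeRight, embedAAB_one_tmul]

lemma comul_lTensor_embed_of_factor {x : A ⊗[R] B}
    (h : (TensorProduct.assoc R A B B).symm (TensorProduct.map LinearMap.id Coalgebra.comul x) =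
      TensorProduct.map (includeLeft (S := R)).toLinearMap LinearMap.id x * (x ⊗ₜ (1 : B))) :
    Algebra.TensorProduct.map (AlgHom.id R H) (Bialgebra.comulAlgHom R H) (embed x) =
      leg₁₃ x * leg₁₂ x := by
  rw [comul_lTensor_embed, h, map_mul, embedABB_map_includeLeft, embedABB_tmul_one]

end Bialgebra

end TwistedTensor

/-- twisted tensor product.  If `A, B` are Hopf algebras,
`H = A ⊗ B` their tensor product Hopf algebra, and `φ ∈ A ⊗ B` is invertible
and satisfies the factorization conditions
`(Δ_A ⊗ id)(φ) = φ₁₃φ₂₃` and `(id ⊗ Δ_B)(φ) = φ₁₃φ₁₂`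
together with `(ε_A ⊗ id)(φ) = 1` and `(id ⊗ ε_B)(φ) = 1`, then the image `Φ`
of `φ` in `H ⊗ H` under `a ⊗ b ↦ (a ⊗ 1) ⊗ (1 ⊗ b)` satisfies the twist
equation and the normalization for `H`. -/
theorem twisted_tensor_product_isTwist
    {k A B : Type u} [Field k] [Ring A] [Ring B] [HopfAlgebra k A] [HopfAlgebra k B]
    (φ : (A ⊗[k] B)ˣ)
    -- `(Δ_A ⊗ id_B)(φ) = φ₁₃ φ₂₃` in `A ⊗ (A ⊗ B)`:
    (hfacA :
      (TensorProduct.assoc k A A B)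
          ((TensorProduct.map (Coalgebra.comul : A →ₗ[k] A ⊗[k] A) LinearMap.id)
            (φ : A ⊗[k] B)) =
        (TensorProduct.map (LinearMap.id : A →ₗ[k] A)
            (Algebra.TensorProduct.includeRight : B →ₐ[k] A ⊗[k] B).toLinearMap)
            (φ : A ⊗[k] B) *
          ((1 : A) ⊗ₜ[k] (φ : A ⊗[k] B)))
    -- `(id_A ⊗ Δ_B)(φ) = φ₁₃ φ₁₂` in `(A ⊗ B) ⊗ B`:
    (hfacB :
      (TensorProduct.assoc k A B B).symm
          ((TensorProduct.map LinearMap.id (Coalgebra.comul : B →ₗ[k] B ⊗[k] B))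
            (φ : A ⊗[k] B)) =
        (TensorProduct.map
            (Algebra.TensorProduct.includeLeft : A →ₐ[k] A ⊗[k] B).toLinearMap
            (LinearMap.id : B →ₗ[k] B)) (φ : A ⊗[k] B) *
          ((φ : A ⊗[k] B) ⊗ₜ[k] (1 : B)))
    -- `(ε_A ⊗ id)(φ) = 1` and `(id ⊗ ε_B)(φ) = 1`:
    (hnormA :
      (TensorProduct.lid k B)
        ((TensorProduct.map (Coalgebra.counit : A →ₗ[k] k) LinearMap.id)
          (φ : A ⊗[k] B)) = 1)
    (hnormB :
      (TensorProduct.rid k A)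
        ((TensorProduct.map LinearMap.id (Coalgebra.counit : B →ₗ[k] k))
          (φ : A ⊗[k] B)) = 1) :
    -- conclusion, about `Φ := Σ (a ⊗ 1) ⊗ (1 ⊗ b) ∈ H ⊗ H`, `H = A ⊗ B`:
    let H := A ⊗[k] B
    let Φ : H ⊗[k] H :=
      (TensorProduct.map
        (Algebra.TensorProduct.includeLeft : A →ₐ[k] A ⊗[k] B).toLinearMap
        (Algebra.TensorProduct.includeRight : B →ₐ[k] A ⊗[k] B).toLinearMap)
        (φ : A ⊗[k] B)
    ((Algebra.TensorProduct.assoc k k k H H H)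
        ((Algebra.TensorProduct.map (Bialgebra.comulAlgHom k H) (AlgHom.id k H)) Φ *
          (Φ ⊗ₜ[k] (1 : H)))
      = (Algebra.TensorProduct.map (AlgHom.id k H) (Bialgebra.comulAlgHom k H)) Φ *
          ((1 : H) ⊗ₜ[k] Φ)) ∧
    (TensorProduct.lid k H)
        ((TensorProduct.map (Coalgebra.counit : H →ₗ[k] k) LinearMap.id) Φ) = 1 ∧
    (TensorProduct.rid k H)
        ((TensorProduct.map LinearMap.id (Coalgebra.counit : H →ₗ[k] k)) Φ) = 1 := by
  dsimp only
  rw [show TensorProduct.map (Algebra.TensorProduct.includeLeft (S := k)).toLinearMap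
    Algebra.TensorProduct.includeRight.toLinearMap (φ : A ⊗[k] B) =
      TwistedTensor.embed (φ : A ⊗[k] B) from rfl]
  refine ⟨?_, ?_, ?_⟩
  · rw [map_mul, TwistedTensor.assoc_comul_rTensor_embed_of_factor hfacA,
      TwistedTensor.assoc_embed_tmul_one, TwistedTensor.comul_lTensor_embed_of_factor hfacB,
      TwistedTensor.one_tmul_embed, mul_assoc, mul_assoc,
      (TwistedTensor.commute_leg₁₂_leg₂₃ _ _).eq]
  · rw [TwistedTensor.lid_counit_rTensor_embed, hnormA, map_one]
  · rw [TwistedTensor.rid_counit_lTensor_embed, hnormB, map_one]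
end
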